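/- For every positive integer n, g(n) = max{ m : s(m) ≤ n }. -/

import Mathlib

/-- `I` is a maximal independent set (MIS) of `G`: it is independent, and it is not
properly contained in any other independent set. -/
def IsMaxIndepSet {V : Type*} (G : SimpleGraph V) (I : Set V) : Prop :=
  (∀ x ∈ I, ∀ y ∈ I, ¬ G.Adj x y) ∧
  ∀ J : Set V, (∀ x ∈ J, ∀ y ∈ J, ¬ G.Adj x y) → I ⊆ J → J = I

/-- The number of maximal independent sets of `G`. -/
noncomputable def misCount {V : Type*} (G : SimpleGraph V) : ℕ :=
  Nat.card {I : Set V // IsMaxIndepSet G I}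

/-- `maxMis n` is the maximum number of maximal independent sets among all simple graphs
on `n` vertices. -/
noncomputable def maxMis (n : ℕ) : ℕ := sSup {k | ∃ G : SimpleGraph (Fin n), misCount G = k}

/-- A family `F` of `k` subsets of the ground set `Fin m` is a separating cover if the
sets cover the ground set and for every pair of distinct elements `x, y` there are
disjoint sets in the family with `x` in one and `y` in the other. -/
def IsSepCover {m k : ℕ} (F : Fin k → Set (Fin m)) : Prop :=
  (∀ x : Fin m, ∃ i, x ∈ F i) ∧
  ∀ x y : Fin m, x ≠ y → ∃ i j, x ∈ F i ∧ y ∈ F j ∧ Disjoint (F i) (F j)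

/-- `sepNum m` is the minimum number of sets in a separating cover on an `m`-element ground set. -/
noncomputable def sepNum (m : ℕ) : ℕ := sInf {k | ∃ F : Fin k → Set (Fin m), IsSepCover F}

lemma exists_mis {n : ℕ} (G : SimpleGraph (Fin n)) (I : Set (Fin n))
    (hI : ∀ x ∈ I, ∀ y ∈ I, ¬ G.Adj x y) :
    ∃ M, I ⊆ M ∧ IsMaxIndepSet G M := by
  obtain ⟨M, hM, h1, h2⟩ := Finite.exists_le_maximal (α := Set (Fin n))
    (p := fun J => ∀ x ∈ J, ∀ y ∈ J, ¬ G.Adj x y) hI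
  exact ⟨M, hM, h1, fun J hJ hMJ => le_antisymm (h2 hJ hMJ) hMJ⟩

lemma misCount_le {n : ℕ} (G : SimpleGraph (Fin n)) :
    misCount G ≤ Nat.card (Set (Fin n)) :=
  Nat.card_le_card_of_injective Subtype.val Subtype.val_injective

lemma misCount_pos {n : ℕ} (G : SimpleGraph (Fin n)) : 1 ≤ misCount G := by
  obtain ⟨M, _, hM⟩ := exists_mis G ∅ (by simp)
  have : Nonempty {I : Set (Fin n) // IsMaxIndepSet G I} := ⟨⟨M, hM⟩⟩
  exact Nat.one_le_iff_ne_zero.2 (Nat.card_ne_zero.2 ⟨this, inferInstance⟩)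

lemma mis_nonempty {n : ℕ} (hn : 1 ≤ n) (G : SimpleGraph (Fin n)) {M : Set (Fin n)}
    (hM : IsMaxIndepSet G M) : ∃ v, v ∈ M := by
  by_contra h
  push_neg at h
  have hMe : M = ∅ := Set.eq_empty_iff_forall_notMem.2 h
  have h0 : ({⟨0, hn⟩} : Set (Fin n)) = M := by
    apply hM.2
    · intro x hx y hy
      simp only [Set.mem_singleton_iff] at hx hy
      subst hx; subst hy; exact G.loopless.irrefl _
    · rw [hMe]; exact Set.empty_subset _
  rw [hMe] at h0
  simp at h0

lemma exists_adj_of_ne {n : ℕ} (G : SimpleGraph (Fin n)) {I J : Set (Fin n)}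
    (hI : IsMaxIndepSet G I) (hJ : IsMaxIndepSet G J) (hne : I ≠ J) :
    ∃ v ∈ I, ∃ b ∈ J, G.Adj v b := by
  obtain ⟨v, hvI, hvJ⟩ : ∃ v ∈ I, v ∉ J := by
    by_contra h
    push_neg at h
    exact hne (hI.2 J hJ.1 h).symm
  have hnotind : ¬ (∀ x ∈ J ∪ {v}, ∀ y ∈ J ∪ {v}, ¬ G.Adj x y) := by
    intro h
    have := hJ.2 (J ∪ {v}) h Set.subset_union_left
    exact hvJ (this ▸ Set.mem_union_right J rfl)
  push_neg at hnotind
  obtain ⟨a, ha, b, hb, hab⟩ := hnotind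
  rcases ha with ha | ha
  · rcases hb with hb | hb
    · exact absurd hab (hJ.1 a ha b hb)
    · simp only [Set.mem_singleton_iff] at hb
      subst hb
      exact ⟨b, hvI, a, ha, hab.symm⟩
  · simp only [Set.mem_singleton_iff] at ha
    subst ha
    rcases hb with hb | hb
    · exact ⟨a, hvI, b, hb, hab⟩
    · simp only [Set.mem_singleton_iff] at hb
      subst hb
      exact absurd hab (G.loopless.irrefl _)

lemma sepNum_le {n : ℕ} (hn : 1 ≤ n) (G : SimpleGraph (Fin n)) : sepNum (misCount G) ≤ n := by
  apply Nat.sInf_le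
  have e : {I : Set (Fin n) // IsMaxIndepSet G I} ≃ Fin (misCount G) :=
    Finite.equivFinOfCardEq rfl
  refine ⟨fun v => {x | v ∈ (e.symm x).1}, ?_, ?_⟩
  · intro x
    obtain ⟨v, hv⟩ := mis_nonempty hn G (e.symm x).2
    exact ⟨v, hv⟩
  · intro x y hxy
    have hne : (e.symm x).1 ≠ (e.symm y).1 := fun h =>
      hxy (e.symm.injective (Subtype.ext h))
    obtain ⟨v, hvI, b, hbJ, hab⟩ := exists_adj_of_ne G (e.symm x).2 (e.symm y).2 hne
    refine ⟨v, b, hvI, hbJ, ?_⟩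
    rw [Set.disjoint_left]
    intro z hz1 hz2
    exact (e.symm z).2.1 v hz1 b hz2 hab

lemma le_misCount {n m k : ℕ} (hk : k ≤ n)
    (F : Fin k → Set (Fin m)) (hF : IsSepCover F) :
    ∃ G : SimpleGraph (Fin n), m ≤ misCount G := by
  classical
  set F' : Fin n → Set (Fin m) :=
    fun v => if h : (v : ℕ) < k then F ⟨v, h⟩ else Set.univ with hF'
  let G : SimpleGraph (Fin n) :=
    { Adj := fun a b => a ≠ b ∧ Disjoint (F' a) (F' b)
      symm := ⟨fun a b h => ⟨h.1.symm, h.2.symm⟩⟩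
      loopless := ⟨fun a h => h.1 rfl⟩ }
  refine ⟨G, ?_⟩
  have hindep : ∀ x : Fin m, ∀ v ∈ {v : Fin n | x ∈ F' v}, ∀ w ∈ {v : Fin n | x ∈ F' v},
      ¬ G.Adj v w := by
    intro x v hv w hw hadj
    exact Set.disjoint_left.1 hadj.2 hv hw
  choose M hsub hmax using fun x : Fin m => exists_mis G {v | x ∈ F' v} (hindep x)
  have hcast : ∀ i : Fin k, F' (Fin.castLE hk i) = F i := by
    intro i
    have hi : ((Fin.castLE hk i : Fin n) : ℕ) < k := i.isLt
    simp only [hF', dif_pos hi]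
    rfl
  have hinj : Function.Injective
      fun x : Fin m => (⟨M x, hmax x⟩ : {I : Set (Fin n) // IsMaxIndepSet G I}) := by
    intro x y hxy
    by_contra hne
    obtain ⟨i, j, hxi, hyj, hdij⟩ := hF.2 x y hne
    have hij : i ≠ j := by
      rintro rfl
      exact (Set.disjoint_left.1 hdij hxi) hxi
    have hvw : G.Adj (Fin.castLE hk i) (Fin.castLE hk j) := by
      refine ⟨fun h => hij (Fin.castLE_injective hk h), ?_⟩
      rw [hcast i, hcast j]; exact hdij
    have hvx : Fin.castLE hk i ∈ M x := hsub x (by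
      simp only [Set.mem_setOf_eq, hcast i]; exact hxi)
    have hwy : Fin.castLE hk j ∈ M y := hsub y (by
      simp only [Set.mem_setOf_eq, hcast j]; exact hyj)
    have hMeq : M x = M y := congrArg Subtype.val hxy
    exact (hmax x).1 _ hvx _ (hMeq ▸ hwy) hvw
  calc m = Nat.card (Fin m) := by simp
    _ ≤ misCount G := Nat.card_le_card_of_injective _ hinj

/-- `maxMis n = max { m : sepNum m ≤ n }` (maximum over positive integers `m`). -/
theorem maxMis_eq_sSup :
    ∀ n : ℕ, 1 ≤ n → maxMis n = sSup {m : ℕ | 1 ≤ m ∧ sepNum m ≤ n} := by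
  intro n hn
  have hbddS : BddAbove {k | ∃ G : SimpleGraph (Fin n), misCount G = k} := by
    refine ⟨Nat.card (Set (Fin n)), ?_⟩
    rintro k ⟨G, rfl⟩
    exact misCount_le G
  have hneS : {k | ∃ G : SimpleGraph (Fin n), misCount G = k}.Nonempty := ⟨_, ⊥, rfl⟩
  obtain ⟨G, hG⟩ : ∃ G : SimpleGraph (Fin n), misCount G = maxMis n :=
    Nat.sSup_mem hneS hbddS
  have hT1 : maxMis n ∈ {m : ℕ | 1 ≤ m ∧ sepNum m ≤ n} := by
    constructor
    · rw [← hG]; exact misCount_pos G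
    · rw [← hG]; exact sepNum_le hn G
  have hub : ∀ m ∈ {m : ℕ | 1 ≤ m ∧ sepNum m ≤ n}, m ≤ maxMis n := by
    rintro m ⟨hm1, hm2⟩
    have hne : {k | ∃ F : Fin k → Set (Fin m), IsSepCover F}.Nonempty := by
      refine ⟨m, fun i => {i}, fun x => ⟨x, rfl⟩, ?_⟩
      intro x y hxy
      exact ⟨x, y, rfl, rfl, by simpa using hxy⟩
    obtain ⟨F, hF⟩ : ∃ F : Fin (sepNum m) → Set (Fin m), IsSepCover F :=
      Nat.sInf_mem hne
    have hkn : sepNum m ≤ n := hm2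
    obtain ⟨G', hG'⟩ := le_misCount hkn F hF
    exact hG'.trans (le_csSup hbddS ⟨G', rfl⟩)
  exact le_antisymm (le_csSup ⟨maxMis n, hub⟩ hT1) (csSup_le ⟨maxMis n, hT1⟩ hub)
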